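/- Let 𝔥 be a fat indecomposable (−3)-saturated Hoffman graph whose reduced representation ψ of norm 3 takes values in the standard lattice ℤⁿ, and suppose a slim vertex s has exactly one fat neighbor in 𝔥. Then: (i) s has at most 4 neighbors in S^−(𝔥), and if it has exactly 4, then S^−(𝔥) is isomorphic to the extended Dynkin graph D̃₄; (ii) if s has exactly 3 neighbors in S^−(𝔥), then two of these neighbors have s as their unique neighbor in S^−(𝔥). -/

import Mathlib

attribute [local instance] Classical.propDecidable

open scoped RealInnerProductSpace

/-- A Hoffman graph: a graph together with a labeling of its vertices as fat or slim,
such that every fat vertex has a slim neighbor and fat vertices are pairwise nonadjacent. -/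
structure HoffmanGraph (V : Type*) where
  graph : SimpleGraph V
  IsFat : V → Prop
  fat_not_adj : ∀ {x y : V}, IsFat x → IsFat y → ¬ graph.Adj x y
  fat_slim_nbr : ∀ {x : V}, IsFat x → ∃ y : V, ¬ IsFat y ∧ graph.Adj x y

namespace HoffmanGraph

variable {V : Type*}

/-- A vertex is slim if it is not fat. -/
def IsSlim (H : HoffmanGraph V) (x : V) : Prop := ¬ H.IsFat x

/-- The type of slim vertices. -/
abbrev Slim (H : HoffmanGraph V) := {v : V // H.IsSlim v}

/-- The number of fat neighbors of a vertex. -/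
noncomputable def fatDeg (H : HoffmanGraph V) (x : V) : ℕ :=
  {f : V | H.IsFat f ∧ H.graph.Adj x f}.ncard

/-- The number of common fat neighbors of two vertices. -/
noncomputable def commonFat (H : HoffmanGraph V) (x y : V) : ℕ :=
  {f : V | H.IsFat f ∧ H.graph.Adj x f ∧ H.graph.Adj y f}.ncard

lemma commonFat_comm (H : HoffmanGraph V) (x y : V) :
    H.commonFat x y = H.commonFat y x := by
  unfold commonFat
  congr 1
  ext f
  simp only [Set.mem_setOf_eq]
  tauto

/-- A Hoffman graph is fat if every slim vertex has a fat neighbor. -/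
def IsFatGraph (H : HoffmanGraph V) : Prop :=
  ∀ x, H.IsSlim x → ∃ f, H.IsFat f ∧ H.graph.Adj x f

/-- A representation of norm `m`. -/
def IsRep (H : HoffmanGraph V) (m : ℝ) {E : Type*} [NormedAddCommGroup E]
    [InnerProductSpace ℝ E] (φ : V → E) : Prop :=
  (∀ x, H.IsSlim x → ⟪φ x, φ x⟫ = m) ∧
  (∀ x, H.IsFat x → ⟪φ x, φ x⟫ = 1) ∧
  (∀ x y, H.graph.Adj x y → ⟪φ x, φ y⟫ = 1) ∧
  (∀ x y, x ≠ y → ¬ H.graph.Adj x y → ⟪φ x, φ y⟫ = 0)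

/-- A reduced representation of norm `m` (only the values on slim vertices matter). -/
def IsReducedRep (H : HoffmanGraph V) (m : ℝ) {E : Type*} [NormedAddCommGroup E]
    [InnerProductSpace ℝ E] (ψ : V → E) : Prop :=
  (∀ x, H.IsSlim x → ⟪ψ x, ψ x⟫ = m - H.fatDeg x) ∧
  (∀ x y, H.IsSlim x → H.IsSlim y → H.graph.Adj x y → ⟪ψ x, ψ y⟫ = 1 - H.commonFat x y) ∧
  (∀ x y, H.IsSlim x → H.IsSlim y → x ≠ y → ¬ H.graph.Adj x y →
    ⟪ψ x, ψ y⟫ = - (H.commonFat x y : ℝ))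

/-- The matrix B(𝔥) = A_s − C Cᵀ, indexed by the slim vertices. -/
noncomputable def matrixB (H : HoffmanGraph V) : Matrix H.Slim H.Slim ℝ :=
  fun x y => (if H.graph.Adj x.1 y.1 then (1 : ℝ) else 0) - (H.commonFat x.1 y.1 : ℝ)

/-- The smallest eigenvalue of a Hoffman graph. -/
noncomputable def lambdaMin (H : HoffmanGraph V) [Fintype V] : ℝ :=
  sInf (spectrum ℝ H.matrixB)

/-- A subset of the vertices induces a Hoffman graph iff every fat vertex of it retains
a slim neighbor inside it. -/
def IsGoodSubset (H : HoffmanGraph V) (S : Set V) : Prop :=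
  ∀ x ∈ S, H.IsFat x → ∃ y ∈ S, ¬ H.IsFat y ∧ H.graph.Adj x y

/-- The induced Hoffman subgraph on a good subset. -/
def induce (H : HoffmanGraph V) (S : Set V) (hS : H.IsGoodSubset S) : HoffmanGraph S where
  graph := H.graph.induce S
  IsFat := fun x => H.IsFat x.1
  fat_not_adj := by
    intro x y hx hy hadj
    exact H.fat_not_adj hx hy hadj
  fat_slim_nbr := by
    rintro ⟨x, hxS⟩ hx
    obtain ⟨y, hyS, hy, hadj⟩ := hS x hxS hx
    exact ⟨⟨y, hyS⟩, hy, hadj⟩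

/-- An (abstract) induced Hoffman subgraph relation between Hoffman graphs. -/
def IsInducedSubgraphOf {V₁ V₂ : Type*} (H₁ : HoffmanGraph V₁) (H₂ : HoffmanGraph V₂) : Prop :=
  ∃ e : V₁ ↪ V₂, (∀ x y, H₂.graph.Adj (e x) (e y) ↔ H₁.graph.Adj x y) ∧
    (∀ x, H₂.IsFat (e x) ↔ H₁.IsFat x)

/-- Isomorphism of Hoffman graphs. -/
def IsIsoTo {V₁ V₂ : Type*} (H₁ : HoffmanGraph V₁) (H₂ : HoffmanGraph V₂) : Prop :=
  ∃ e : V₁ ≃ V₂, (∀ x y, H₂.graph.Adj (e x) (e y) ↔ H₁.graph.Adj x y) ∧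
    (∀ x, H₂.IsFat (e x) ↔ H₁.IsFat x)

/-- `H` is the sum of its induced subgraphs on `W₁` and `W₂`. -/
structure IsSum (H : HoffmanGraph V) (W₁ W₂ : Set V) : Prop where
  nonempty₁ : W₁.Nonempty
  nonempty₂ : W₂.Nonempty
  good₁ : H.IsGoodSubset W₁
  good₂ : H.IsGoodSubset W₂
  union_eq : W₁ ∪ W₂ = Set.univ
  slim_partition : ∀ v, H.IsSlim v → (v ∈ W₁ ↔ v ∉ W₂)
  fat_closed₁ : ∀ x ∈ W₁, H.IsSlim x → ∀ f, H.IsFat f → H.graph.Adj x f → f ∈ W₁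
  fat_closed₂ : ∀ x ∈ W₂, H.IsSlim x → ∀ f, H.IsFat f → H.graph.Adj x f → f ∈ W₂
  common_le : ∀ x ∈ W₁, ∀ y ∈ W₂, H.IsSlim x → H.IsSlim y → H.commonFat x y ≤ 1
  common_iff : ∀ x ∈ W₁, ∀ y ∈ W₂, H.IsSlim x → H.IsSlim y →
    (H.commonFat x y = 1 ↔ H.graph.Adj x y)

/-- `H` is decomposable if it is the sum of two nonempty induced Hoffman subgraphs. -/
def Decomposable (H : HoffmanGraph V) : Prop := ∃ W₁ W₂ : Set V, H.IsSum W₁ W₂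

def Indecomposable (H : HoffmanGraph V) : Prop := ¬ H.Decomposable

/-- `H` is the sum of the family of its induced subgraphs on `W i`. -/
structure IsSumFamily (H : HoffmanGraph V) {n : ℕ} (W : Fin n → Set V) : Prop where
  nonempty : ∀ i, (W i).Nonempty
  good : ∀ i, H.IsGoodSubset (W i)
  union_eq : ⋃ i, W i = Set.univ
  slim_mem_unique : ∀ v, H.IsSlim v → ∃! i, v ∈ W i
  fat_closed : ∀ i, ∀ x ∈ W i, H.IsSlim x → ∀ f, H.IsFat f → H.graph.Adj x f → f ∈ W i
  common_le : ∀ i j, i ≠ j → ∀ x ∈ W i, ∀ y ∈ W j, H.IsSlim x → H.IsSlim y →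
    H.commonFat x y ≤ 1
  common_iff : ∀ i j, i ≠ j → ∀ x ∈ W i, ∀ y ∈ W j, H.IsSlim x → H.IsSlim y →
    (H.commonFat x y = 1 ↔ H.graph.Adj x y)

/-- Attach a new fat vertex (the `none` vertex) adjacent exactly to the slim vertices in `S`. -/
def attachFat (H : HoffmanGraph V) (S : Set V) (hne : S.Nonempty)
    (hslim : ∀ v ∈ S, H.IsSlim v) : HoffmanGraph (Option V) where
  graph := {
    Adj := fun a b =>
      match a, b with
      | none, none => False
      | none, some v => v ∈ S
      | some v, none => v ∈ S
      | some u, some v => H.graph.Adj u v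
    symm := by
      constructor
      rintro (_|u) (_|v) h
      · exact h.elim
      · exact h
      · exact h
      · exact h.symm
    loopless := by
      constructor
      rintro (_|u) h
      · exact h.elim
      · exact H.graph.loopless.irrefl u h }
  IsFat := fun a => match a with | none => True | some v => H.IsFat v
  fat_not_adj := by
    rintro (_|u) (_|v) hu hv h
    · exact h.elim
    · exact (hslim v h) hv
    · exact (hslim u h) hu
    · exact H.fat_not_adj hu hv h
  fat_slim_nbr := by
    rintro (_|u) hu
    · obtain ⟨s, hs⟩ := hne
      exact ⟨some s, hslim s hs, hs⟩
    · obtain ⟨y, hy, hadj⟩ := H.fat_slim_nbr hu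
      exact ⟨some y, hy, hadj⟩

/-- `H` is `μ`-saturated: it has smallest eigenvalue at least `μ` and no fat vertex can be
attached while keeping the smallest eigenvalue at least `μ`. -/
def IsSaturated (H : HoffmanGraph V) [Fintype V] (μ : ℝ) : Prop :=
  μ ≤ H.lambdaMin ∧
  ∀ (S : Set V) (hne : S.Nonempty) (hslim : ∀ v ∈ S, H.IsSlim v),
    ¬ (μ ≤ (H.attachFat S hne hslim).lambdaMin)

/-- The special graph `S⁻(𝔥)`: slim vertices, adjacent when the inner product of their
reduced representations is negative. -/
noncomputable def specialMinus (H : HoffmanGraph V) : SimpleGraph H.Slim where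
  Adj x y := x ≠ y ∧
    ((H.graph.Adj x.1 y.1 ∧ (1 : ℝ) - (H.commonFat x.1 y.1 : ℝ) < 0) ∨
     (¬ H.graph.Adj x.1 y.1 ∧ -(H.commonFat x.1 y.1 : ℝ) < 0))
  symm := by
    constructor
    rintro x y ⟨hne, h⟩
    refine ⟨hne.symm, ?_⟩
    rw [H.commonFat_comm y.1 x.1]
    rcases h with ⟨ha, hl⟩ | ⟨ha, hl⟩
    · exact Or.inl ⟨ha.symm, hl⟩
    · exact Or.inr ⟨fun hadj => ha hadj.symm, hl⟩
  loopless := ⟨fun x h => h.1 rfl⟩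

/-- The special graph `S⁺(𝔥)`: slim vertices, adjacent when the inner product of their
reduced representations is positive. -/
noncomputable def specialPlus (H : HoffmanGraph V) : SimpleGraph H.Slim where
  Adj x y := x ≠ y ∧
    ((H.graph.Adj x.1 y.1 ∧ 0 < (1 : ℝ) - (H.commonFat x.1 y.1 : ℝ)) ∨
     (¬ H.graph.Adj x.1 y.1 ∧ 0 < -(H.commonFat x.1 y.1 : ℝ)))
  symm := by
    constructor
    rintro x y ⟨hne, h⟩
    refine ⟨hne.symm, ?_⟩
    rw [H.commonFat_comm y.1 x.1]
    rcases h with ⟨ha, hl⟩ | ⟨ha, hl⟩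
    · exact Or.inl ⟨ha.symm, hl⟩
    · exact Or.inr ⟨fun hadj => ha hadj.symm, hl⟩
  loopless := ⟨fun x h => h.1 rfl⟩

/-- The special graph `S(𝔥)`, the union of `S⁻(𝔥)` and `S⁺(𝔥)`. -/
noncomputable def special (H : HoffmanGraph V) : SimpleGraph H.Slim :=
  H.specialMinus ⊔ H.specialPlus

/-- `⟨S⟩_𝔥`: the set `S` together with all fat neighbors of its members. -/
def closureSet (H : HoffmanGraph V) (S : Set V) : Set V :=
  S ∪ {f | H.IsFat f ∧ ∃ x ∈ S, H.graph.Adj x f}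

/-- The Hoffman graph `𝔥^(t)` with one slim vertex (`none`) and `t` fat vertices. -/
def manyFat (t : ℕ) : HoffmanGraph (Option (Fin t)) where
  graph := {
    Adj := fun a b => (a = none ∧ b ≠ none) ∨ (a ≠ none ∧ b = none)
    symm := by
      constructor
      rintro a b (⟨h1, h2⟩ | ⟨h1, h2⟩)
      · exact Or.inr ⟨h2, h1⟩
      · exact Or.inl ⟨h2, h1⟩
    loopless := by
      constructor
      rintro a (⟨h1, h2⟩ | ⟨h1, h2⟩)
      · exact h2 h1
      · exact h1 h2 }
  IsFat := fun a => a ≠ none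
  fat_not_adj := by
    rintro a b ha hb (⟨h1, _⟩ | ⟨_, h1⟩)
    · exact ha h1
    · exact hb h1
  fat_slim_nbr := by
    intro a ha
    refine ⟨none, by simp, Or.inr ⟨ha, rfl⟩⟩

/-- An ordinary (slim) graph regarded as a Hoffman graph. -/
def ofSimple {W : Type*} (G : SimpleGraph W) : HoffmanGraph W where
  graph := G
  IsFat := fun _ => False
  fat_not_adj := by intro x y hx _ _; exact hx
  fat_slim_nbr := by intro x hx; exact hx.elim

end HoffmanGraph
namespace HoffmanGraph

variable {V : Type*}

/-- The Hoffman graph obtained by replacing the fat vertices `f i` by slim cliques of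
sizes `n i`, joining all neighbors of `f i` to all vertices of the `i`-th clique. -/
def blowup {k : ℕ} (H : HoffmanGraph V) (f : Fin k → V) (hf : ∀ i, H.IsFat (f i))
    (n : Fin k → ℕ) :
    HoffmanGraph ({v : V // v ∉ Set.range f} ⊕ (Σ i : Fin k, Fin (n i))) where
  graph := {
    Adj := fun a b =>
      match a, b with
      | .inl u, .inl v => H.graph.Adj u.1 v.1
      | .inl u, .inr x => H.graph.Adj u.1 (f x.1)
      | .inr x, .inl v => H.graph.Adj (f x.1) v.1
      | .inr x, .inr y => x ≠ y ∧ x.1 = y.1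
    symm := by
      constructor
      rintro (u|x) (v|y) h
      · exact h.symm
      · exact h.symm
      · exact h.symm
      · exact ⟨h.1.symm, h.2.symm⟩
    loopless := by
      constructor
      rintro (u|x) h
      · exact H.graph.loopless.irrefl _ h
      · exact h.1 rfl }
  IsFat := fun a => match a with | .inl u => H.IsFat u.1 | .inr _ => False
  fat_not_adj := by
    rintro (u|x) (v|y) hu hv h
    · exact H.fat_not_adj hu hv h
    · exact hv
    · exact hu
    · exact hu
  fat_slim_nbr := by
    rintro (u|x) hu
    · obtain ⟨y, hy, hadj⟩ := H.fat_slim_nbr hu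
      refine ⟨Sum.inl ⟨y, ?_⟩, hy, hadj⟩
      rintro ⟨i, rfl⟩
      exact hy (hf i)
    · exact hu.elim

/-- The slim graph obtained by replacing every fat vertex by a slim `n`-clique,
joining all neighbors of a fat vertex to all vertices of its clique. -/
def blowupAll (H : HoffmanGraph V) (n : ℕ) :
    HoffmanGraph (H.Slim ⊕ ({f : V // H.IsFat f} × Fin n)) where
  graph := {
    Adj := fun a b =>
      match a, b with
      | .inl u, .inl v => H.graph.Adj u.1 v.1
      | .inl u, .inr x => H.graph.Adj u.1 x.1.1
      | .inr x, .inl v => H.graph.Adj x.1.1 v.1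
      | .inr x, .inr y => x ≠ y ∧ x.1 = y.1
    symm := by
      constructor
      rintro (u|x) (v|y) h
      · exact h.symm
      · exact h.symm
      · exact h.symm
      · exact ⟨h.1.symm, h.2.symm⟩
    loopless := by
      constructor
      rintro (u|x) h
      · exact H.graph.loopless.irrefl _ h
      · exact h.1 rfl }
  IsFat := fun _ => False
  fat_not_adj := by intro x y hx _; exact hx.elim
  fat_slim_nbr := by intro x hx; exact hx.elim

/-- The Hoffman graph of Example 4.2: slim vertices `ℤ/4ℤ` (the `inl`'s), fat vertices
`f_j` for `j ∈ ℤ/4ℤ` (the `inr`'s), with edges `{0,2}`, `{1,3}` and `{i, f_j}` for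
`i = j` or `i = j + 1`. -/
def exampleA3tilde : HoffmanGraph (ZMod 4 ⊕ ZMod 4) where
  graph := {
    Adj := fun a b =>
      match a, b with
      | .inl i, .inl j => j = i + 2
      | .inl i, .inr j => i = j ∨ i = j + 1
      | .inr j, .inl i => i = j ∨ i = j + 1
      | .inr _, .inr _ => False
    symm := by
      have h4 : (2 : ZMod 4) + 2 = 0 := by decide
      constructor
      rintro (i|i) (j|j) h
      · have h' : j = i + 2 := h
        subst h'
        show i = i + 2 + 2
        rw [add_assoc, h4, add_zero]
      · exact h
      · exact h
      · exact h.elim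
    loopless := by
      constructor
      rintro (i|i) h
      · exact absurd (left_eq_add.mp h) (by decide)
      · exact h }
  IsFat := fun a => match a with | .inl _ => False | .inr _ => True
  fat_not_adj := by
    rintro (i|i) (j|j) hx hy h
    · exact hx
    · exact hx
    · exact hy
    · exact h
  fat_slim_nbr := by
    rintro (i|i) hx
    · exact hx.elim
    · exact ⟨Sum.inl i, id, Or.inl rfl⟩

end HoffmanGraph

/-- The extended Dynkin graph `D̃₄`, i.e. the star `K_{1,4}`. -/
def tildeD4Graph : SimpleGraph (Fin 5) := SimpleGraph.fromRel (fun a _ => a = 0)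

/-- The Dynkin graph `A_m`: the path on `m` vertices. -/
def dynkinA (m : ℕ) : SimpleGraph (Fin m) :=
  SimpleGraph.fromRel (fun i j => i.1 + 1 = j.1)

/-- The extended Dynkin graph `Ã_m`: the cycle on `m + 1` vertices. -/
def tildeA (m : ℕ) : SimpleGraph (ZMod (m + 1)) :=
  SimpleGraph.fromRel (fun i j => i + 1 = j)

/-- The Dynkin graph `D_m`: the path `1 - 2 - ⋯ - (m-1)` with the extra vertex `0`
attached to the vertex `2`. -/
def dynkinD (m : ℕ) : SimpleGraph (Fin m) :=
  SimpleGraph.fromRel (fun i j => (1 ≤ i.1 ∧ i.1 + 1 = j.1) ∨ (i.1 = 0 ∧ j.1 = 2))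

/-- The extended Dynkin graph `D̃_m` on `m + 1` vertices: the path `1 - 2 - ⋯ - (m-1)`
with the extra vertex `0` attached to `2` and the extra vertex `m` attached to `m - 2`. -/
def tildeD (m : ℕ) : SimpleGraph (Fin (m + 1)) :=
  SimpleGraph.fromRel (fun i j =>
    (1 ≤ i.1 ∧ i.1 + 1 = j.1 ∧ j.1 ≤ m - 1) ∨ (i.1 = 0 ∧ j.1 = 2) ∨ (i.1 = m ∧ j.1 = m - 2))

/-!
The `S⁻`-neighbours `t` of `s` all share the unique fat neighbour `f` of `s`. Hence
`⟪ψ s, ψ s⟫ = 2`, `⟪ψ s, ψ t⟫ = -1`, `⟪ψ t, ψ t⟫ ≤ 2` and `⟪ψ t, ψ t'⟫ ≤ 0`, and expanding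
`‖2 ∑ ψ t + m ψ s‖² ≥ 0` for `m` neighbours gives `m ≤ 4`.

If `m = 4`, all these inequalities are equalities: `∑ ψ t = -2 ψ s`, and the `ψ t` are orthogonal
of norm `2`. Pairing with `2 ψ s + ∑ ψ t = 0`, a vertex outside the star (whose inner products with
the star vertices all have one sign, according to whether it is adjacent to `f`) is orthogonal to
the whole star. Indecomposability then leaves only the star `D̃₄`.

If `m = 3`, the neighbours are pairwise orthogonal. As `ψ s` is integral of norm `2`, it has at
most two nonzero coordinates, so two neighbours `x, y` are negative against `ψ s` in the same
coordinate `i`, and this forces `ψ x + ψ y = 2 (ψ x)ᵢ eᵢ`. For another `S⁻`-neighbour `w` of `x`,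
integrality makes `⟪ψ x, ψ w⟫ + ⟪ψ y, ψ w⟫` even. This yields `ψ s + ψ x + ψ y + ψ w = 0`, so
`⟪ψ z, ψ w⟫ = 1` for the third neighbour `z`, although `z` and `w` share the fat vertex `f`.
-/

section InnerProductInequalities

open Finset

lemma eq_zero_of_add_sum_eq_zero {ι : Type*} {T : Finset ι} {a : ℝ} {g : ι → ℝ}
    (h : a + ∑ t ∈ T, g t = 0)
    (hsign : (0 ≤ a ∧ ∀ t ∈ T, 0 ≤ g t) ∨ (a ≤ 0 ∧ ∀ t ∈ T, g t ≤ 0)) :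
    a = 0 ∧ ∀ t ∈ T, g t = 0 := by
  rcases hsign with ⟨ha, hg⟩ | ⟨ha, hg⟩
  · have hT := sum_nonneg hg
    exact ⟨by linarith, (sum_eq_zero_iff_of_nonneg hg).mp (by linarith)⟩
  · have hT := sum_nonpos hg
    exact ⟨by linarith, (sum_eq_zero_iff_of_nonpos hg).mp (by linarith)⟩

variable {E : Type*} [NormedAddCommGroup E] [InnerProductSpace ℝ E]

lemma add_add_add_eq_zero_of_inner_le {a b c d : E} (ha : ⟪a, a⟫ ≤ 2) (hb : ⟪b, b⟫ ≤ 2)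
    (hc : ⟪c, c⟫ ≤ 2) (hd : ⟪d, d⟫ ≤ 2)
    (h : ⟪a, b⟫ + ⟪a, c⟫ + ⟪a, d⟫ + ⟪b, c⟫ + ⟪b, d⟫ + ⟪c, d⟫ ≤ -4) : a + b + c + d = 0 := by
  refine inner_self_eq_zero.mp (le_antisymm ?_ real_inner_self_nonneg)
  simp only [inner_add_left, inner_add_right]
  linarith [real_inner_comm a b, real_inner_comm a c, real_inner_comm a d, real_inner_comm b c,
    real_inner_comm b d, real_inner_comm c d]

lemma neg_three_div_four_le_inner_add_inner_add_inner {u x y z : E} (hu : ⟪u, u⟫ = 2)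
    (hux : ⟪u, x⟫ = -1) (huy : ⟪u, y⟫ = -1) (huz : ⟪u, z⟫ = -1)
    (hx : ⟪x, x⟫ ≤ 2) (hy : ⟪y, y⟫ ≤ 2) (hz : ⟪z, z⟫ ≤ 2) :
    -3 / 4 ≤ ⟪x, y⟫ + ⟪x, z⟫ + ⟪y, z⟫ := by
  have h := real_inner_self_nonneg (x := (2 : ℝ) • (x + y + z) + (3 : ℝ) • u)
  simp only [inner_add_left, inner_add_right, real_inner_smul_left, real_inner_smul_right,
    real_inner_comm u, real_inner_comm x y, real_inner_comm x z, real_inner_comm y z] at h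
  linarith

lemma inner_sum_eq_inner_self_add_sum_erase {ι : Type*} {T : Finset ι} (v : ι → E) {t : ι}
    (ht : t ∈ T) :
    ⟪v t, ∑ t' ∈ T, v t'⟫ = ⟪v t, v t⟫ + ∑ t' ∈ T.erase t, ⟪v t, v t'⟫ := by
  rw [inner_sum, ← add_sum_erase T _ ht]

/-- The Gram constraints met by the reduced representations of a slim vertex with a single fat
neighbour (the center `u`) and of its `S⁻`-neighbours (the legs `v t`). -/
structure ObtuseStar {ι : Type*} (u : E) (T : Finset ι) (v : ι → E) : Prop where
  inner_self_center : ⟪u, u⟫ = 2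
  inner_center_leg : ∀ t ∈ T, ⟪u, v t⟫ = -1
  inner_self_leg_le : ∀ t ∈ T, ⟪v t, v t⟫ ≤ 2
  inner_legs_nonpos : ∀ t ∈ T, ∀ t' ∈ T, t ≠ t' → ⟪v t, v t'⟫ ≤ 0

namespace ObtuseStar

variable {ι : Type*} {u : E} {T : Finset ι} {v : ι → E}

lemma sum_inner_legs_erase_nonpos (h : ObtuseStar u T v) {t : ι} (ht : t ∈ T) :
    ∑ t' ∈ T.erase t, ⟪v t, v t'⟫ ≤ 0 :=
  sum_nonpos fun t' ht' =>
    h.inner_legs_nonpos t ht t' (mem_of_mem_erase ht') (ne_of_mem_erase ht').symm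

lemma inner_sum_self_le (h : ObtuseStar u T v) :
    ⟪∑ t ∈ T, v t, ∑ t ∈ T, v t⟫ ≤ 2 * #T := by
  rw [sum_inner]
  calc ∑ t ∈ T, ⟪v t, ∑ t' ∈ T, v t'⟫ ≤ ∑ _t ∈ T, (2 : ℝ) := by
        refine sum_le_sum fun t ht => ?_
        rw [inner_sum_eq_inner_self_add_sum_erase v ht]
        linarith [h.inner_self_leg_le t ht, h.sum_inner_legs_erase_nonpos ht]
    _ = 2 * #T := by rw [sum_const, nsmul_eq_mul, mul_comm]

lemma inner_self_two_smul_sum_add (h : ObtuseStar u T v) :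
    ⟪(2 : ℝ) • ∑ t ∈ T, v t + (#T : ℝ) • u, (2 : ℝ) • ∑ t ∈ T, v t + (#T : ℝ) • u⟫ =
      4 * ⟪∑ t ∈ T, v t, ∑ t ∈ T, v t⟫ - 2 * (#T : ℝ) ^ 2 := by
  have hu : ⟪u, ∑ t ∈ T, v t⟫ = -#T := by
    rw [inner_sum, sum_congr rfl h.inner_center_leg]
    simp
  simp only [inner_add_left, inner_add_right, real_inner_smul_left, real_inner_smul_right,
    real_inner_comm u, hu, h.inner_self_center]
  ring

lemma card_sq_le (h : ObtuseStar u T v) :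
    (#T : ℝ) ^ 2 ≤ 2 * ⟪∑ t ∈ T, v t, ∑ t ∈ T, v t⟫ := by
  have := h.inner_self_two_smul_sum_add ▸ real_inner_self_nonneg
  linarith

lemma card_le_four (h : ObtuseStar u T v) : #T ≤ 4 := by
  have hle : (#T : ℝ) ≤ 4 := by nlinarith [h.card_sq_le, h.inner_sum_self_le]
  exact_mod_cast hle

lemma sum_eq_neg_two_smul (h : ObtuseStar u T v) (hT : #T = 4) :
    ∑ t ∈ T, v t = (-2 : ℝ) • u := by
  have hzero := h.inner_self_two_smul_sum_add
  have hS := h.inner_sum_self_le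
  have hS' := h.card_sq_le
  rw [hT] at hzero hS hS'
  push_cast at hzero hS hS'
  have h0 : (2 : ℝ) • ∑ t ∈ T, v t + (4 : ℝ) • u = 0 :=
    inner_self_eq_zero.mp (by rw [hzero]; linarith)
  calc ∑ t ∈ T, v t = (1 / 2 : ℝ) • ((2 : ℝ) • ∑ t ∈ T, v t + (4 : ℝ) • u) + (-2 : ℝ) • u := by
        module
    _ = (-2 : ℝ) • u := by rw [h0, smul_zero, zero_add]

lemma inner_leg_eq_of_card_eq_four (h : ObtuseStar u T v) (hT : #T = 4) {t : ι} (ht : t ∈ T) :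
    ⟪v t, v t⟫ = 2 ∧ ∀ t' ∈ T, t' ≠ t → ⟪v t, v t'⟫ = 0 := by
  have hrow : ⟪v t, ∑ t' ∈ T, v t'⟫ = 2 := by
    rw [h.sum_eq_neg_two_smul hT, real_inner_smul_right, real_inner_comm,
      h.inner_center_leg t ht]
    norm_num
  rw [inner_sum_eq_inner_self_add_sum_erase v ht] at hrow
  have hdiag := h.inner_self_leg_le t ht
  have hoff := h.sum_inner_legs_erase_nonpos ht
  have hoff0 : ∑ t' ∈ T.erase t, ⟪v t, v t'⟫ = 0 := by linarith
  refine ⟨by linarith, fun t' ht' hne => ?_⟩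
  refine (sum_eq_zero_iff_of_nonpos fun t'' ht'' => ?_).mp hoff0 t' (mem_erase.mpr ⟨hne, ht'⟩)
  exact h.inner_legs_nonpos t ht t'' (mem_of_mem_erase ht'') (ne_of_mem_erase ht'').symm

lemma inner_legs_eq_zero_of_card_eq_three (h : ObtuseStar u T v) (hT : #T = 3)
    (hneg : ∀ t ∈ T, ∀ t' ∈ T, t ≠ t' → ⟪v t, v t'⟫ < 0 → ⟪v t, v t'⟫ ≤ -1) :
    ∀ t ∈ T, ∀ t' ∈ T, t ≠ t' → ⟪v t, v t'⟫ = 0 := by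
  have key : ∀ t ∈ T, ∀ t' ∈ T, t ≠ t' → -3 / 4 ≤ ⟪v t, v t'⟫ → ⟪v t, v t'⟫ = 0 :=
    fun t ht t' ht' hne hge => le_antisymm (h.inner_legs_nonpos t ht t' ht' hne)
      (not_lt.mp fun hlt => by linarith [hneg t ht t' ht' hne hlt])
  obtain ⟨a, b, c, hab, hac, hbc, rfl⟩ := card_eq_three.mp hT
  have hsum := neg_three_div_four_le_inner_add_inner_add_inner h.inner_self_center
    (h.inner_center_leg a (by simp)) (h.inner_center_leg b (by simp))
    (h.inner_center_leg c (by simp)) (h.inner_self_leg_le a (by simp))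
    (h.inner_self_leg_le b (by simp)) (h.inner_self_leg_le c (by simp))
  have hab' := h.inner_legs_nonpos a (by simp) b (by simp) hab
  have hac' := h.inner_legs_nonpos a (by simp) c (by simp) hac
  have hbc' := h.inner_legs_nonpos b (by simp) c (by simp) hbc
  have hba := real_inner_comm (v a) (v b)
  have hca := real_inner_comm (v a) (v c)
  have hcb := real_inner_comm (v b) (v c)
  intro t ht t' ht' hne
  apply key t ht t' ht' hne
  simp only [mem_insert, mem_singleton] at ht ht'
  rcases ht with rfl | rfl | rfl <;> rcases ht' with rfl | rfl | rfl <;>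
    first | exact absurd rfl hne | linarith

end ObtuseStar

end InnerProductInequalities

lemma SimpleGraph.nonempty_iso_tildeD4Graph {W : Type*} [Fintype W] (G : SimpleGraph W) (c : W)
    (hcard : Fintype.card W = 5) (hadj : ∀ x y, G.Adj x y ↔ x ≠ y ∧ (x = c ∨ y = c)) :
    Nonempty (G ≃g tildeD4Graph) := by
  let e₀ := Fintype.equivFinOfCardEq hcard
  let e := e₀.trans (Equiv.swap (e₀ c) 0)
  have he : ∀ x, e x = 0 ↔ x = c := fun x => by
    rw [← e.apply_eq_iff_eq (y := c)]
    simp [e]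
  refine ⟨⟨e, fun {x y} => ?_⟩⟩
  simp only [tildeD4Graph, SimpleGraph.fromRel_adj, ne_eq, e.apply_eq_iff_eq, he, hadj]

section IntegralVectors

open Finset

lemma Int.eq_and_mul_self_eq_one_of_mul_pos {b c : ℤ} (hb : b * b ≤ 2) (hc : c * c ≤ 2)
    (hbc : 0 < b * c) : b = c ∧ b * b = 1 := by
  obtain ⟨hb1, hb2⟩ : -1 ≤ b ∧ b ≤ 1 := by constructor <;> nlinarith
  obtain ⟨hc1, hc2⟩ : -1 ≤ c ∧ c ≤ 1 := by constructor <;> nlinarith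
  interval_cases b <;> interval_cases c <;> simp_all

namespace EuclideanSpace

variable {ι : Type*} [Fintype ι]

lemma real_inner_eq_sum (x y : EuclideanSpace ℝ ι) :
    ⟪x, y⟫ = ∑ i, x i * y i := by
  simp [PiLp.inner_apply, mul_comm]

lemma exists_mul_neg_of_inner_neg {x y : EuclideanSpace ℝ ι} (h : ⟪x, y⟫ < 0) :
    ∃ i, x i * y i < 0 := by
  have hsum : ∑ i, x i * y i < ∑ _i : ι, (0 : ℝ) := by
    simpa [real_inner_eq_sum] using h
  obtain ⟨i, -, hi⟩ := exists_lt_of_sum_lt hsum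
  exact ⟨i, hi⟩

lemma mul_self_le_inner_self (x : EuclideanSpace ℝ ι) (i : ι) :
    x i * x i ≤ ⟪x, x⟫ := by
  rw [real_inner_eq_sum]
  exact single_le_sum (fun j _ => mul_self_nonneg (x j)) (mem_univ i)

lemma card_support_le_inner_self {x : EuclideanSpace ℝ ι}
    (hx : ∀ i, ∃ k : ℤ, x i = k) : (#{i | x i ≠ 0} : ℝ) ≤ ⟪x, x⟫ := by
  rw [real_inner_eq_sum]
  calc (#{i | x i ≠ 0} : ℝ) = ∑ _i ∈ {i | x i ≠ 0}, (1 : ℝ) := by simp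
    _ ≤ ∑ i ∈ {i | x i ≠ 0}, x i * x i := sum_le_sum fun i hi => by
        obtain ⟨k, hk⟩ := hx i
        rw [mem_filter, hk, Int.cast_ne_zero] at hi
        have hkk : 1 ≤ k * k := by rcases lt_or_gt_of_ne hi.2 with h | h <;> nlinarith
        have hkk' : (1 : ℝ) ≤ k * k := by exact_mod_cast hkk
        rwa [hk]
    _ ≤ ∑ i, x i * x i :=
        sum_le_sum_of_subset_of_nonneg (subset_univ _) fun j _ _ => mul_self_nonneg (x j)

lemma exists_ne_mul_neg_of_inner_neg {κ : Type*} {T : Finset κ}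
    {u : EuclideanSpace ℝ ι} (hu : ∀ i, ∃ k : ℤ, u i = k) (hcard : ⟪u, u⟫ < #T)
    {v : κ → EuclideanSpace ℝ ι} (hv : ∀ t ∈ T, ⟪u, v t⟫ < 0) :
    ∃ x ∈ T, ∃ y ∈ T, x ≠ y ∧ ∃ i, u i * v x i < 0 ∧ u i * v y i < 0 := by
  choose g hg using fun t : T => exists_mul_neg_of_inner_neg (hv t t.2)
  have hlt : #{i | u i ≠ 0} < #(univ : Finset T) := by
    rw [card_univ, Fintype.card_coe]
    exact_mod_cast (card_support_le_inner_self hu).trans_lt hcard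
  obtain ⟨x, -, y, -, hxy, hgxy⟩ := exists_ne_map_eq_of_card_lt_of_maps_to hlt (f := g)
    fun t _ => mem_filter.mpr ⟨mem_univ _, fun h0 => (hg t).ne (by rw [h0, zero_mul])⟩
  exact ⟨x, x.2, y, y.2, Subtype.coe_injective.ne hxy, g x, hg x, hgxy ▸ hg y⟩

lemma eq_and_mul_self_eq_one_of_mul_neg {u x y : EuclideanSpace ℝ ι}
    (hx : ∀ i, ∃ k : ℤ, x i = k) (hy : ∀ i, ∃ k : ℤ, y i = k) (hxx : ⟪x, x⟫ ≤ 2)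
    (hyy : ⟪y, y⟫ ≤ 2) {i : ι} (hxi : u i * x i < 0) (hyi : u i * y i < 0) :
    x i = y i ∧ x i * x i = 1 := by
  obtain ⟨k, hk⟩ := hx i
  obtain ⟨l, hl⟩ := hy i
  have hkl : (0 : ℝ) < k * l := by
    rw [← hk, ← hl]
    nlinarith [mul_pos_of_neg_of_neg hxi hyi, mul_self_nonneg (u i)]
  have hkk : (k * k : ℝ) ≤ 2 := hk ▸ (mul_self_le_inner_self x i).trans hxx
  have hll : (l * l : ℝ) ≤ 2 := hl ▸ (mul_self_le_inner_self y i).trans hyy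
  obtain ⟨hkl', hk1⟩ := Int.eq_and_mul_self_eq_one_of_mul_pos (b := k) (c := l)
    (by exact_mod_cast hkk) (by exact_mod_cast hll) (by exact_mod_cast hkl)
  have hk1' : (k : ℝ) * k = 1 := by exact_mod_cast hk1
  exact ⟨by rw [hk, hl, hkl'], hk ▸ hk1'⟩

lemma add_eq_single_of_inner_eq_zero {x y : EuclideanSpace ℝ ι}
    (hxx : ⟪x, x⟫ ≤ 2) (hyy : ⟪y, y⟫ ≤ 2) (hxy : ⟪x, y⟫ = 0) {i : ι} (hxyi : x i = y i)
    (hxi : x i * x i = 1) : ⟪x, x⟫ = 2 ∧ x + y = EuclideanSpace.single i (2 * x i) := by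
  set d := x + y - EuclideanSpace.single i (2 * x i)
  have hd : ⟪d, d⟫ = ⟪x, x⟫ + ⟪y, y⟫ - 4 := by
    simp only [d, inner_add_left, inner_sub_left, inner_add_right, inner_sub_right,
      EuclideanSpace.inner_single_left, EuclideanSpace.inner_single_right, PiLp.single_apply]
    simp only [conj_trivial, if_true, real_inner_comm x y, hxy, ← hxyi]
    linear_combination (-4 : ℝ) * hxi
  have h0 := real_inner_self_nonneg (x := d)
  have hd0 : ⟪d, d⟫ = 0 := by linarith
  exact ⟨by linarith, sub_eq_zero.mp (inner_self_eq_zero.mp hd0)⟩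

lemma inner_le_neg_one_of_add_eq_single {x y w : EuclideanSpace ℝ ι}
    (hx : ∀ i, ∃ k : ℤ, x i = k) (hw : ∀ i, ∃ k : ℤ, w i = k) {i : ι}
    (hsum : x + y = EuclideanSpace.single i (2 * x i)) (hxw : ⟪x, w⟫ = -1) (hyw : ⟪y, w⟫ ≤ 0) :
    ⟪y, w⟫ ≤ -1 := by
  obtain ⟨k, hk⟩ := hx i
  obtain ⟨l, hl⟩ := hw i
  have hpar : ⟪x, w⟫ + ⟪y, w⟫ = 2 * (k * l : ℤ) := by
    rw [← inner_add_left, hsum, EuclideanSpace.inner_single_left, hk, hl]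
    push_cast
    simp only [conj_trivial]
    ring
  have hneg : k * l < 0 := by exact_mod_cast (by linarith : ((k * l : ℤ) : ℝ) < 0)
  have hle : ((k * l : ℤ) : ℝ) ≤ -1 := by exact_mod_cast Int.le_sub_one_of_lt hneg
  linarith

end EuclideanSpace

end IntegralVectors

namespace HoffmanGraph

variable {V : Type*} {H : HoffmanGraph V}

section FatNeighbors

variable [Finite V]

lemma commonFat_le_fatDeg (x y : V) : H.commonFat x y ≤ H.fatDeg x :=
  Set.ncard_le_ncard fun _ hf => ⟨hf.1, hf.2.1⟩

lemma one_le_commonFat {x y f : V} (hf : H.IsFat f) (hxf : H.graph.Adj x f)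
    (hyf : H.graph.Adj y f) : 1 ≤ H.commonFat x y :=
  (Set.ncard_pos).mpr ⟨f, hf, hxf, hyf⟩

lemma one_le_fatDeg (hfat : H.IsFatGraph) {x : V} (hx : H.IsSlim x) : 1 ≤ H.fatDeg x := by
  obtain ⟨f, hf, hxf⟩ := hfat x hx
  exact (Set.ncard_pos).mpr ⟨f, hf, hxf⟩

lemma exists_fat_adj_of_fatDeg_eq_one {x : V} (h1 : H.fatDeg x = 1) :
    ∃ f, H.IsFat f ∧ H.graph.Adj x f :=
  (Set.ncard_pos).mp (show 0 < H.fatDeg x by omega)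

lemma adj_of_fatDeg_eq_one {x y f : V} (h1 : H.fatDeg x = 1) (hf : H.IsFat f)
    (hxf : H.graph.Adj x f) (hc : 1 ≤ H.commonFat x y) : H.graph.Adj y f := by
  obtain ⟨g, hg, hxg, hyg⟩ := (Set.ncard_pos).mp hc
  have hfg : f = g := (Set.ncard_le_one_iff).mp h1.le ⟨hf, hxf⟩ ⟨hg, hxg⟩
  exact hfg ▸ hyg

end FatNeighbors

section Decomposition

lemma mem_closureSet_image_iff {Q : Set H.Slim} (x : H.Slim) :
    x.1 ∈ H.closureSet (Subtype.val '' Q) ↔ x ∈ Q := by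
  refine ⟨?_, fun hx => Or.inl ⟨x, hx, rfl⟩⟩
  rintro (⟨y, hy, hyx⟩ | ⟨hf, -⟩)
  · exact Subtype.ext hyx ▸ hy
  · exact absurd hf x.2

lemma isGoodSubset_closureSet_image (Q : Set H.Slim) :
    H.IsGoodSubset (H.closureSet (Subtype.val '' Q)) := by
  rintro x (⟨y, -, rfl⟩ | ⟨-, y, hy, hyx⟩) hx
  · exact absurd hx y.2
  · obtain ⟨y', hy', rfl⟩ := hy
    exact ⟨y', Or.inl ⟨y', hy', rfl⟩, y'.2, hyx.symm⟩

lemma fat_mem_closureSet_image {Q : Set H.Slim} {x f : V}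
    (hx : x ∈ H.closureSet (Subtype.val '' Q)) (hxs : H.IsSlim x) (hf : H.IsFat f)
    (hxf : H.graph.Adj x f) : f ∈ H.closureSet (Subtype.val '' Q) :=
  Or.inr ⟨hf, x, ⟨⟨x, hxs⟩, (mem_closureSet_image_iff ⟨x, hxs⟩).mp hx, rfl⟩, hxf⟩

lemma closureSet_image_union_closureSet_image_compl (Q : Set H.Slim) :
    H.closureSet (Subtype.val '' Q) ∪ H.closureSet (Subtype.val '' Qᶜ) = Set.univ := by
  refine Set.eq_univ_of_forall fun v => ?_
  by_cases hv : H.IsFat v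
  · obtain ⟨y, hy, hvy⟩ := H.fat_slim_nbr hv
    by_cases hyQ : (⟨y, hy⟩ : H.Slim) ∈ Q
    · exact Or.inl (Or.inr ⟨hv, y, ⟨_, hyQ, rfl⟩, hvy.symm⟩)
    · exact Or.inr (Or.inr ⟨hv, y, ⟨_, hyQ, rfl⟩, hvy.symm⟩)
  · by_cases hvQ : (⟨v, hv⟩ : H.Slim) ∈ Q
    · exact Or.inl (Or.inl ⟨_, hvQ, rfl⟩)
    · exact Or.inr (Or.inl ⟨_, hvQ, rfl⟩)

lemma decomposable_of_split (P : Set H.Slim) (hP : P.Nonempty) (hPc : Pᶜ.Nonempty)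
    (hcross : ∀ x ∈ P, ∀ y ∉ P,
      H.commonFat x y ≤ 1 ∧ (H.commonFat x y = 1 ↔ H.graph.Adj x y)) :
    H.Decomposable := by
  have hmem₁ := fun (x : V) (hx : H.IsSlim x) => mem_closureSet_image_iff (Q := P) ⟨x, hx⟩
  have hmem₂ := fun (x : V) (hx : H.IsSlim x) => mem_closureSet_image_iff (Q := Pᶜ) ⟨x, hx⟩
  refine ⟨_, _,
    { nonempty₁ := ⟨_, Or.inl ⟨_, hP.some_mem, rfl⟩⟩
      nonempty₂ := ⟨_, Or.inl ⟨_, hPc.some_mem, rfl⟩⟩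
      good₁ := isGoodSubset_closureSet_image P
      good₂ := isGoodSubset_closureSet_image Pᶜ
      union_eq := closureSet_image_union_closureSet_image_compl P
      slim_partition := fun v hv => by rw [hmem₁ v hv, hmem₂ v hv, Set.mem_compl_iff, not_not]
      fat_closed₁ := fun x hx hxs f hf hxf => fat_mem_closureSet_image hx hxs hf hxf
      fat_closed₂ := fun x hx hxs f hf hxf => fat_mem_closureSet_image hx hxs hf hxf
      common_le := fun x hx y hy hxs hys =>
        (hcross _ ((hmem₁ x hxs).mp hx) _ ((hmem₂ y hys).mp hy)).1
      common_iff := fun x hx y hy hxs hys =>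
        (hcross _ ((hmem₁ x hxs).mp hx) _ ((hmem₂ y hys).mp hy)).2 }⟩

end Decomposition

namespace IsReducedRep

section InnerProductSpace

variable {E : Type*} [NormedAddCommGroup E] [InnerProductSpace ℝ E] {m : ℝ} {ψ : V → E}

lemma inner_eq (hψ : H.IsReducedRep m ψ) {x y : V} (hx : H.IsSlim x)
    (hy : H.IsSlim y) (hxy : x ≠ y) :
    ⟪ψ x, ψ y⟫ = (if H.graph.Adj x y then 1 else 0) - H.commonFat x y := by
  split_ifs with hadj
  · exact hψ.2.1 x y hx hy hadj
  · rw [zero_sub]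
    exact hψ.2.2 x y hx hy hxy hadj

lemma inner_nonpos (hψ : H.IsReducedRep m ψ) {x y : V} (hx : H.IsSlim x)
    (hy : H.IsSlim y) (hxy : x ≠ y) (hc : 1 ≤ H.commonFat x y) : ⟪ψ x, ψ y⟫ ≤ 0 := by
  have hc' : (1 : ℝ) ≤ H.commonFat x y := by exact_mod_cast hc
  rw [hψ.inner_eq hx hy hxy]
  split_ifs <;> linarith

lemma inner_le_neg_one (hψ : H.IsReducedRep m ψ) {x y : V} (hx : H.IsSlim x)
    (hy : H.IsSlim y) (hxy : x ≠ y) (hneg : ⟪ψ x, ψ y⟫ < 0) :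
    ⟪ψ x, ψ y⟫ ≤ -1 ∧ 1 ≤ H.commonFat x y := by
  rw [hψ.inner_eq hx hy hxy] at hneg ⊢
  split_ifs at hneg ⊢
  · have hc : 1 < H.commonFat x y := by
      exact_mod_cast (show (1 : ℝ) < H.commonFat x y by linarith)
    have hc' : (2 : ℝ) ≤ H.commonFat x y := by exact_mod_cast hc
    exact ⟨by linarith, hc.le⟩
  · have hc : 0 < H.commonFat x y := by
      exact_mod_cast (show (0 : ℝ) < H.commonFat x y by linarith)
    have hc' : (1 : ℝ) ≤ H.commonFat x y := by exact_mod_cast hc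
    exact ⟨by linarith, hc⟩

lemma inner_eq_neg_one (hψ : H.IsReducedRep m ψ) {x y : V} (hx : H.IsSlim x)
    (hy : H.IsSlim y) (hxy : x ≠ y) (hc : H.commonFat x y ≤ 1) (hneg : ⟪ψ x, ψ y⟫ < 0) :
    ⟪ψ x, ψ y⟫ = -1 := by
  have hc' : (H.commonFat x y : ℝ) ≤ 1 := by exact_mod_cast hc
  have hge : -1 ≤ ⟪ψ x, ψ y⟫ := by
    rw [hψ.inner_eq hx hy hxy]
    split_ifs <;> linarith
  linarith [(hψ.inner_le_neg_one hx hy hxy hneg).1]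

lemma commonFat_of_inner_eq_zero (hψ : H.IsReducedRep m ψ) {x y : V}
    (hx : H.IsSlim x) (hy : H.IsSlim y) (hxy : x ≠ y) (h0 : ⟪ψ x, ψ y⟫ = 0) :
    H.commonFat x y ≤ 1 ∧ (H.commonFat x y = 1 ↔ H.graph.Adj x y) := by
  rw [hψ.inner_eq hx hy hxy] at h0
  split_ifs at h0 with hadj
  · have : H.commonFat x y = 1 := by exact_mod_cast (by linarith : (H.commonFat x y : ℝ) = 1)
    exact ⟨this.le, by simp [this, hadj]⟩
  · have : H.commonFat x y = 0 := by exact_mod_cast (by linarith : (H.commonFat x y : ℝ) = 0)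
    simp [this, hadj]

lemma specialMinus_adj_iff (hψ : H.IsReducedRep m ψ) (x y : H.Slim) :
    H.specialMinus.Adj x y ↔ x ≠ y ∧ ⟪ψ x, ψ y⟫ < 0 := by
  refine and_congr_right fun hxy => ?_
  rw [hψ.inner_eq x.2 y.2 (Subtype.coe_ne_coe.mpr hxy)]
  split_ifs with hadj <;> simp [hadj]

lemma decomposable_of_inner_eq_zero (hψ : H.IsReducedRep m ψ) (P : Set H.Slim)
    (hP : P.Nonempty) (hPc : Pᶜ.Nonempty) (h0 : ∀ x ∈ P, ∀ y ∉ P, ⟪ψ x, ψ y⟫ = 0) :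
    H.Decomposable :=
  decomposable_of_split P hP hPc fun x hx y hy =>
    hψ.commonFat_of_inner_eq_zero x.2 y.2 (fun h => hy (Subtype.ext h ▸ hx)) (h0 x hx y hy)

lemma fatDeg_eq_one_iff (hψ : H.IsReducedRep 3 ψ) (x : H.Slim) :
    H.fatDeg x = 1 ↔ ⟪ψ x, ψ x⟫ = 2 := by
  rw [hψ.1 x x.2]
  refine ⟨fun h1 => by rw [h1]; norm_num, fun h2 => ?_⟩
  exact_mod_cast (by linarith : (H.fatDeg x : ℝ) = 1)

section FatNeighbors

variable [Finite V]

lemma inner_nonpos_of_adj_fat (hψ : H.IsReducedRep m ψ) {x y : H.Slim} {f : V} (hxy : x ≠ y)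
    (hf : H.IsFat f) (hxf : H.graph.Adj x f) (hyf : H.graph.Adj y f) : ⟪ψ x, ψ y⟫ ≤ 0 :=
  hψ.inner_nonpos x.2 y.2 (Subtype.coe_ne_coe.mpr hxy) (one_le_commonFat hf hxf hyf)

lemma inner_eq_neg_one_of_adj_specialMinus (hψ : H.IsReducedRep m ψ) {x y : H.Slim}
    (h1 : H.fatDeg x = 1) (hadj : H.specialMinus.Adj x y) : ⟪ψ x, ψ y⟫ = -1 :=
  let ⟨hxy, hneg⟩ := (hψ.specialMinus_adj_iff x y).mp hadj
  hψ.inner_eq_neg_one x.2 y.2 (Subtype.coe_ne_coe.mpr hxy) (h1 ▸ commonFat_le_fatDeg _ _) hneg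

lemma adj_fat_of_adj_specialMinus (hψ : H.IsReducedRep m ψ) {x y : H.Slim} {f : V}
    (h1 : H.fatDeg x = 1) (hf : H.IsFat f) (hxf : H.graph.Adj x f)
    (hadj : H.specialMinus.Adj x y) : H.graph.Adj y f :=
  let ⟨hxy, hneg⟩ := (hψ.specialMinus_adj_iff x y).mp hadj
  adj_of_fatDeg_eq_one h1 hf hxf (hψ.inner_le_neg_one x.2 y.2 (Subtype.coe_ne_coe.mpr hxy) hneg).2

lemma inner_nonneg_of_not_adj_fat (hψ : H.IsReducedRep m ψ) {x y : H.Slim} {f : V}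
    (hxy : x ≠ y) (h1 : H.fatDeg x = 1) (hf : H.IsFat f) (hxf : H.graph.Adj x f)
    (hyf : ¬ H.graph.Adj y f) : 0 ≤ ⟪ψ x, ψ y⟫ :=
  not_lt.mp fun hneg => hyf <| hψ.adj_fat_of_adj_specialMinus h1 hf hxf <|
    (hψ.specialMinus_adj_iff x y).mpr ⟨hxy, hneg⟩

lemma inner_self_le_two (hψ : H.IsReducedRep 3 ψ) (hfat : H.IsFatGraph) (x : H.Slim) :
    ⟪ψ x, ψ x⟫ ≤ 2 := by
  have h1 : (1 : ℝ) ≤ H.fatDeg x := by exact_mod_cast one_le_fatDeg hfat x.2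
  linarith [hψ.1 x x.2]

end FatNeighbors

section OneFatNeighbor

open Finset SimpleGraph

variable [Fintype V]

lemma obtuseStar_neighborFinset (hψ : H.IsReducedRep 3 ψ) (hfat : H.IsFatGraph)
    {s : H.Slim} (h1 : H.fatDeg s = 1) :
    ObtuseStar (ψ s) (H.specialMinus.neighborFinset s) (fun t => ψ t) where
  inner_self_center := (hψ.fatDeg_eq_one_iff s).mp h1
  inner_center_leg t ht :=
    hψ.inner_eq_neg_one_of_adj_specialMinus h1 ((mem_neighborFinset _ _ _).mp ht)
  inner_self_leg_le t _ := hψ.inner_self_le_two hfat t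
  inner_legs_nonpos t ht t' ht' htt' := by
    obtain ⟨f, hf, hsf⟩ := exists_fat_adj_of_fatDeg_eq_one h1
    rw [mem_neighborFinset] at ht ht'
    exact hψ.inner_nonpos_of_adj_fat htt' hf (hψ.adj_fat_of_adj_specialMinus h1 hf hsf ht)
      (hψ.adj_fat_of_adj_specialMinus h1 hf hsf ht')

lemma ncard_neighborSet_specialMinus_le_four (hψ : H.IsReducedRep 3 ψ)
    (hfat : H.IsFatGraph) {s : H.Slim} (h1 : H.fatDeg s = 1) :
    (H.specialMinus.neighborSet s).ncard ≤ 4 := by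
  rw [Set.ncard_eq_toFinset_card', ← neighborFinset_def]
  exact (hψ.obtuseStar_neighborFinset hfat h1).card_le_four

lemma inner_eq_zero_of_card_neighborFinset_eq_four (hψ : H.IsReducedRep 3 ψ)
    (hfat : H.IsFatGraph) {s : H.Slim} (h1 : H.fatDeg s = 1)
    (h4 : #(H.specialMinus.neighborFinset s) = 4) {z : H.Slim} (hzs : z ≠ s)
    (hsz : ¬ H.specialMinus.Adj s z) :
    ⟪ψ z, ψ s⟫ = 0 ∧ ∀ t, H.specialMinus.Adj s t → ⟪ψ z, ψ t⟫ = 0 := by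
  have star := hψ.obtuseStar_neighborFinset hfat h1
  obtain ⟨f, hf, hsf⟩ := exists_fat_adj_of_fatDeg_eq_one h1
  have hsum : 2 * ⟪ψ z, ψ s⟫ + ∑ t ∈ H.specialMinus.neighborFinset s, ⟪ψ z, ψ t⟫ = 0 := by
    rw [← inner_sum, star.sum_eq_neg_two_smul h4, real_inner_smul_right]
    ring
  have hzt : ∀ t ∈ H.specialMinus.neighborFinset s, z ≠ t := fun t ht hzt =>
    hsz (hzt ▸ (mem_neighborFinset _ _ _).mp ht)
  have htf : ∀ t ∈ H.specialMinus.neighborFinset s, H.graph.Adj t f := fun t ht =>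
    hψ.adj_fat_of_adj_specialMinus h1 hf hsf ((mem_neighborFinset _ _ _).mp ht)
  have hsign : (0 ≤ 2 * ⟪ψ z, ψ s⟫ ∧ ∀ t ∈ H.specialMinus.neighborFinset s, 0 ≤ ⟪ψ z, ψ t⟫) ∨
      (2 * ⟪ψ z, ψ s⟫ ≤ 0 ∧ ∀ t ∈ H.specialMinus.neighborFinset s, ⟪ψ z, ψ t⟫ ≤ 0) := by
    by_cases hzf : H.graph.Adj z f
    · exact Or.inr ⟨by linarith [hψ.inner_nonpos_of_adj_fat hzs hf hzf hsf],
        fun t ht => hψ.inner_nonpos_of_adj_fat (hzt t ht) hf hzf (htf t ht)⟩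
    · refine Or.inl ⟨?_, fun t ht => ?_⟩
      · linarith [real_inner_comm (ψ z) (ψ s),
          hψ.inner_nonneg_of_not_adj_fat hzs.symm h1 hf hsf hzf]
      · have ht1 : H.fatDeg t = 1 :=
          (hψ.fatDeg_eq_one_iff t).mpr (star.inner_leg_eq_of_card_eq_four h4 ht).1
        rw [real_inner_comm]
        exact hψ.inner_nonneg_of_not_adj_fat (hzt t ht).symm ht1 hf (htf t ht) hzf
  obtain ⟨hs0, ht0⟩ := eq_zero_of_add_sum_eq_zero hsum hsign
  exact ⟨by linarith, fun t ht => ht0 t ((mem_neighborFinset _ _ _).mpr ht)⟩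

lemma eq_or_adj_of_card_neighborFinset_eq_four (hψ : H.IsReducedRep 3 ψ)
    (hfat : H.IsFatGraph) {s : H.Slim} (h1 : H.fatDeg s = 1) (hind : H.Indecomposable)
    (h4 : #(H.specialMinus.neighborFinset s) = 4) (z : H.Slim) :
    z = s ∨ H.specialMinus.Adj s z := by
  by_contra! hz
  refine hind (hψ.decomposable_of_inner_eq_zero {x | x = s ∨ H.specialMinus.Adj s x}
    ⟨s, Or.inl rfl⟩ ⟨z, by simpa using hz⟩ fun x hx y hy => ?_)
  simp only [Set.mem_ofPred_eq, not_or] at hy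
  obtain ⟨hys, hyt⟩ := hψ.inner_eq_zero_of_card_neighborFinset_eq_four hfat h1 h4 hy.1 hy.2
  rw [real_inner_comm]
  rcases hx with rfl | hx
  exacts [hys, hyt x hx]

lemma nonempty_iso_tildeD4Graph (hψ : H.IsReducedRep 3 ψ) (hfat : H.IsFatGraph) {s : H.Slim}
    (h1 : H.fatDeg s = 1) (hind : H.Indecomposable)
    (h4 : (H.specialMinus.neighborSet s).ncard = 4) :
    Nonempty (H.specialMinus ≃g tildeD4Graph) := by
  rw [Set.ncard_eq_toFinset_card', ← neighborFinset_def] at h4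
  have hall := hψ.eq_or_adj_of_card_neighborFinset_eq_four hfat h1 hind h4
  have star := hψ.obtuseStar_neighborFinset hfat h1
  refine H.specialMinus.nonempty_iso_tildeD4Graph s ?_ fun x y => ⟨fun hxy => ?_, ?_⟩
  · have huniv : (univ : Finset H.Slim) = insert s (H.specialMinus.neighborFinset s) := by
      ext z
      simp [hall z]
    rw [← card_univ, huniv, card_insert_of_notMem (by simp), h4]
  · refine ⟨hxy.ne, by_contra fun hxys => ?_⟩
    have hx := (hall x).resolve_left (not_or.mp hxys).1
    have hy := (hall y).resolve_left (not_or.mp hxys).2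
    have h0 := (star.inner_leg_eq_of_card_eq_four h4 ((mem_neighborFinset _ _ _).mpr hx)).2 y
      ((mem_neighborFinset _ _ _).mpr hy) hxy.ne.symm
    exact (((hψ.specialMinus_adj_iff x y).mp hxy).2).ne h0
  · rintro ⟨hxy, rfl | rfl⟩
    · exact (hall y).resolve_left hxy.symm
    · exact ((hall x).resolve_left hxy).symm

end OneFatNeighbor

end InnerProductSpace

section IntegralRep

open Finset SimpleGraph

variable [Fintype V] {n : ℕ} {ψ : V → EuclideanSpace ℝ (Fin n)}

lemma neighborSet_eq_singleton_of_mul_neg (hψ : H.IsReducedRep 3 ψ) (hfat : H.IsFatGraph)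
    (hint : ∀ v, H.IsSlim v → ∀ i, ∃ k : ℤ, ψ v i = k) {s : H.Slim} (h1 : H.fatDeg s = 1)
    (horth : ∀ t ∈ H.specialMinus.neighborFinset s, ∀ t' ∈ H.specialMinus.neighborFinset s,
      t ≠ t' → ⟪ψ t, ψ t'⟫ = 0)
    {x y z : H.Slim} (hx : H.specialMinus.Adj s x) (hy : H.specialMinus.Adj s y)
    (hz : H.specialMinus.Adj s z) (hxy : x ≠ y) (hzx : z ≠ x) (hzy : z ≠ y) {i : Fin n}
    (hxi : ψ s i * ψ x i < 0) (hyi : ψ s i * ψ y i < 0) :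
    H.specialMinus.neighborSet x = {s} := by
  have horth' : ∀ {t t'}, H.specialMinus.Adj s t → H.specialMinus.Adj s t' → t ≠ t' →
      ⟪ψ t, ψ t'⟫ = 0 := fun ht ht' =>
    horth _ ((mem_neighborFinset _ _ _).mpr ht) _ ((mem_neighborFinset _ _ _).mpr ht')
  obtain ⟨f, hf, hsf⟩ := exists_fat_adj_of_fatDeg_eq_one h1
  have hxx := hψ.inner_self_le_two hfat x
  have hyy := hψ.inner_self_le_two hfat y
  obtain ⟨hxyi, hxi1⟩ := EuclideanSpace.eq_and_mul_self_eq_one_of_mul_neg (hint x x.2)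
    (hint y y.2) hxx hyy hxi hyi
  obtain ⟨hxx2, hsum⟩ :=
    EuclideanSpace.add_eq_single_of_inner_eq_zero hxx hyy (horth' hx hy hxy) hxyi hxi1
  have hx1 : H.fatDeg x = 1 := (hψ.fatDeg_eq_one_iff x).mpr hxx2
  have hxf := hψ.adj_fat_of_adj_specialMinus h1 hf hsf hx
  refine Set.eq_singleton_iff_unique_mem.mpr ⟨hx.symm, fun w hxw => by_contra fun hws => ?_⟩
  have hxw : H.specialMinus.Adj x w := hxw
  have hwf := hψ.adj_fat_of_adj_specialMinus hx1 hf hxf hxw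
  have hsw : ¬ H.specialMinus.Adj s w := fun hsw =>
    ((hψ.specialMinus_adj_iff x w).mp hxw).2.ne (horth' hx hsw hxw.ne)
  have hsw0 : ⟪ψ s, ψ w⟫ = 0 := le_antisymm (hψ.inner_nonpos_of_adj_fat (Ne.symm hws) hf hsf hwf)
    (not_lt.mp fun hneg => hsw ((hψ.specialMinus_adj_iff s w).mpr ⟨Ne.symm hws, hneg⟩))
  have hnonpos : ∀ {t}, H.specialMinus.Adj s t → ⟪ψ t, ψ w⟫ ≤ 0 := fun ht =>
    hψ.inner_nonpos_of_adj_fat (fun htw => hsw (htw ▸ ht)) hf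
      (hψ.adj_fat_of_adj_specialMinus h1 hf hsf ht) hwf
  have hxw1 := hψ.inner_eq_neg_one_of_adj_specialMinus hx1 hxw
  have hyw1 := EuclideanSpace.inner_le_neg_one_of_add_eq_single (hint x x.2) (hint w w.2) hsum
    hxw1 (hnonpos hy)
  have hzero := add_add_add_eq_zero_of_inner_le (hψ.inner_self_le_two hfat s) hxx hyy
    (hψ.inner_self_le_two hfat w) (by linarith [hψ.inner_eq_neg_one_of_adj_specialMinus h1 hx,
      hψ.inner_eq_neg_one_of_adj_specialMinus h1 hy, horth' hx hy hxy])
  have hzw : ⟪ψ z, ψ w⟫ = 1 := by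
    rw [eq_neg_of_add_eq_zero_right hzero, inner_neg_right, inner_add_right, inner_add_right,
      real_inner_comm (ψ s), hψ.inner_eq_neg_one_of_adj_specialMinus h1 hz, horth' hz hx hzx,
      horth' hz hy hzy]
    norm_num
  linarith [hnonpos hz]

lemma exists_leaves_of_ncard_eq_three (hψ : H.IsReducedRep 3 ψ) (hfat : H.IsFatGraph)
    (hint : ∀ v, H.IsSlim v → ∀ i, ∃ k : ℤ, ψ v i = k) {s : H.Slim} (h1 : H.fatDeg s = 1)
    (h3 : (H.specialMinus.neighborSet s).ncard = 3) :
    ∃ t₁ t₂ : H.Slim, t₁ ≠ t₂ ∧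
      t₁ ∈ H.specialMinus.neighborSet s ∧ t₂ ∈ H.specialMinus.neighborSet s ∧
      H.specialMinus.neighborSet t₁ = {s} ∧ H.specialMinus.neighborSet t₂ = {s} := by
  rw [Set.ncard_eq_toFinset_card', ← neighborFinset_def] at h3
  have star := hψ.obtuseStar_neighborFinset hfat h1
  have horth := star.inner_legs_eq_zero_of_card_eq_three h3 fun t _ t' _ htt' hneg =>
    (hψ.inner_le_neg_one t.2 t'.2 (Subtype.coe_ne_coe.mpr htt') hneg).1
  obtain ⟨x, hx, y, hy, hxy, i, hxi, hyi⟩ := EuclideanSpace.exists_ne_mul_neg_of_inner_neg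
    (hint s s.2) (by rw [star.inner_self_center, h3]; norm_num)
    fun t ht => by rw [star.inner_center_leg t ht]; norm_num
  obtain ⟨z, hz⟩ : (((H.specialMinus.neighborFinset s).erase x).erase y).Nonempty := by
    rw [← card_pos, card_erase_of_mem (mem_erase.mpr ⟨hxy.symm, hy⟩), card_erase_of_mem hx, h3]
    norm_num
  obtain ⟨hzy, hzx, hz⟩ := by simpa only [mem_erase] using hz
  rw [mem_neighborFinset] at hx hy hz
  exact ⟨x, y, hxy, hx, hy,
    hψ.neighborSet_eq_singleton_of_mul_neg hfat hint h1 horth hx hy hz hxy hzx hzy hxi hyi,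
    hψ.neighborSet_eq_singleton_of_mul_neg hfat hint h1 horth hy hx hz hxy.symm hzy hzx hyi hxi⟩

end IntegralRep

end IsReducedRep

end HoffmanGraph

theorem specialMinus_neighbors_of_one_fat_neighbor_general {V : Type} [Fintype V]
    (H : HoffmanGraph V) (hfat : H.IsFatGraph) (hind : H.Indecomposable)
    (n : ℕ) (ψ : V → EuclideanSpace ℝ (Fin n)) (hψ : H.IsReducedRep 3 ψ)
    (hint : ∀ v, H.IsSlim v → ∀ i, ∃ k : ℤ, ψ v i = (k : ℝ))
    (s : V) (hs : H.IsSlim s) (h1 : H.fatDeg s = 1) :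
    ((H.specialMinus.neighborSet ⟨s, hs⟩).ncard ≤ 4 ∧
      ((H.specialMinus.neighborSet ⟨s, hs⟩).ncard = 4 →
        Nonempty (H.specialMinus ≃g tildeD4Graph))) ∧
    ((H.specialMinus.neighborSet ⟨s, hs⟩).ncard = 3 →
      ∃ t₁ t₂ : H.Slim, t₁ ≠ t₂ ∧
        t₁ ∈ H.specialMinus.neighborSet ⟨s, hs⟩ ∧
        t₂ ∈ H.specialMinus.neighborSet ⟨s, hs⟩ ∧
        H.specialMinus.neighborSet t₁ = {⟨s, hs⟩} ∧
        H.specialMinus.neighborSet t₂ = {⟨s, hs⟩}) :=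
  ⟨⟨hψ.ncard_neighborSet_specialMinus_le_four hfat h1,
      hψ.nonempty_iso_tildeD4Graph hfat h1 hind⟩,
    hψ.exists_leaves_of_ncard_eq_three hfat hint h1⟩

/-- Lemma 4.8: in a fat indecomposable `(-3)`-saturated Hoffman graph with an integral
reduced representation of norm `3`, if a slim vertex `s` has exactly one fat neighbor,
then (i) `s` has at most `4` neighbors in `S⁻(𝔥)`, with equality only if
`S⁻(𝔥) ≅ D̃₄`; (ii) if `s` has exactly `3` neighbors in `S⁻(𝔥)`, two of them have `s`
as their unique neighbor in `S⁻(𝔥)`. -/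
theorem specialMinus_neighbors_of_one_fat_neighbor {V : Type} [Fintype V]
    (H : HoffmanGraph V) (hfat : H.IsFatGraph) (hind : H.Indecomposable)
    (hsat : H.IsSaturated (-3))
    (n : ℕ) (ψ : V → EuclideanSpace ℝ (Fin n)) (hψ : H.IsReducedRep 3 ψ)
    (hint : ∀ v, H.IsSlim v → ∀ i, ∃ k : ℤ, ψ v i = (k : ℝ))
    (s : V) (hs : H.IsSlim s) (h1 : H.fatDeg s = 1) :
    ((H.specialMinus.neighborSet ⟨s, hs⟩).ncard ≤ 4 ∧
      ((H.specialMinus.neighborSet ⟨s, hs⟩).ncard = 4 →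
        Nonempty (H.specialMinus ≃g tildeD4Graph))) ∧
    ((H.specialMinus.neighborSet ⟨s, hs⟩).ncard = 3 →
      ∃ t₁ t₂ : H.Slim, t₁ ≠ t₂ ∧
        t₁ ∈ H.specialMinus.neighborSet ⟨s, hs⟩ ∧
        t₂ ∈ H.specialMinus.neighborSet ⟨s, hs⟩ ∧
        H.specialMinus.neighborSet t₁ = {⟨s, hs⟩} ∧
        H.specialMinus.neighborSet t₂ = {⟨s, hs⟩}) :=
  specialMinus_neighbors_of_one_fat_neighbor_general H hfat hind n ψ hψ hint s hs h1
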